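/- The 2×2 matrix M = [[(n+m-2)/(n+m), 2/(n+m)], [((n-1)/n + (m-1)/m)/(n+m), (n+m-2)/(n+m)]] has eigenvalues λ_± = 1 - (2/(n+m))(1 ± √(1 - 1/(2n) - 1/(2m))), and its spectral radius is λ_- = 1 - (2/(n+m))(1 - √(1 - 1/(2n) - 1/(2m))). -/

import Mathlib

/-
The matrix has the form `!![a, b; c, a]` with `a = (n+m-2)/(n+m)`, so its characteristic
polynomial is `(a - λ)² - bc`. Clearing denominators shows `bc = t²` with
`t = (2/(n+m)) √(1 - 1/(2n) - 1/(2m))`, hence the eigenvalues are `a ∓ t`, and since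
`a, t ≥ 0` the larger one `a + t` dominates both in absolute value.
-/

open Matrix

/-- The reduced 2×2 matrix for two coalescing random walks on `K_{n,m}`. -/
noncomputable def crwReducedMatrix (n m : ℕ) : Matrix (Fin 2) (Fin 2) ℝ :=
  !![((n : ℝ) + m - 2) / ((n : ℝ) + m), 2 / ((n : ℝ) + m);
     (((n : ℝ) - 1) / n + ((m : ℝ) - 1) / m) / ((n : ℝ) + m),
       ((n : ℝ) + m - 2) / ((n : ℝ) + m)]

section SameDiagonal

variable {R : Type*} [CommRing R]

theorem det_fin_two_of_same_diag_sub_smul_one (a b c x : R) :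
    det (!![a, b; c, a] - x • (1 : Matrix (Fin 2) (Fin 2) R)) = (a - x) ^ 2 - b * c := by
  simp [det_fin_two]
  ring

theorem det_fin_two_of_same_diag_sub_smul_one_eq_zero_iff [IsDomain R] {a b c t : R}
    (hbc : b * c = t ^ 2) (x : R) :
    det (!![a, b; c, a] - x • (1 : Matrix (Fin 2) (Fin 2) R)) = 0 ↔ x = a - t ∨ x = a + t := by
  rw [det_fin_two_of_same_diag_sub_smul_one, hbc, sub_eq_zero, sq_eq_sq_iff_eq_or_eq_neg]
  exact or_congr ⟨fun h => by linear_combination -h, fun h => by linear_combination -h⟩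
    ⟨fun h => by linear_combination -h, fun h => by linear_combination -h⟩

end SameDiagonal

theorem Matrix.map_of_fin_two {α β : Type*} (f : α → β) (a b c d : α) :
    (!![a, b; c, d]).map f = !![f a, f b; f c, f d] :=
  (eta_fin_two _).trans rfl

theorem Complex.norm_le_add_of_eq_sub_or_eq_add {a t : ℝ} (ha : 0 ≤ a) (ht : 0 ≤ t) {z : ℂ}
    (hz : z = a - t ∨ z = a + t) : ‖z‖ ≤ a + t := by
  rcases hz with rfl | rfl
  · rw [← Complex.ofReal_sub, Complex.norm_real, Real.norm_eq_abs, abs_le]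
    constructor <;> linarith
  · rw [← Complex.ofReal_add, Complex.norm_real, Real.norm_of_nonneg (by positivity)]

theorem crwReducedMatrix_offDiag_mul {n m : ℕ} (hn : 1 ≤ n) (hm : 1 ≤ m) :
    2 / ((n : ℝ) + m) * ((((n : ℝ) - 1) / n + ((m : ℝ) - 1) / m) / ((n : ℝ) + m)) =
      (2 / ((n : ℝ) + m) * Real.sqrt (1 - 1 / (2 * n) - 1 / (2 * m))) ^ 2 := by
  have hn' : (1 : ℝ) ≤ n := by exact_mod_cast hn
  have hm' : (1 : ℝ) ≤ m := by exact_mod_cast hm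
  have hinv_n : 1 / (2 * (n : ℝ)) ≤ 1 / 2 := by gcongr; linarith
  have hinv_m : 1 / (2 * (m : ℝ)) ≤ 1 / 2 := by gcongr; linarith
  rw [mul_pow, Real.sq_sqrt (by linarith)]
  field_simp
  ring

/-- The matrix `M = [[(n+m-2)/(n+m), 2/(n+m)], [((n-1)/n + (m-1)/m)/(n+m), (n+m-2)/(n+m)]]`
has eigenvalues `λ± = 1 - (2/(n+m))(1 ± √(1 - 1/(2n) - 1/(2m)))`, and its spectral radius
is `λ₋ = 1 - (2/(n+m))(1 - √(1 - 1/(2n) - 1/(2m)))`. -/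
theorem crw_reduced_matrix_eigenvalues (n m : ℕ) (hmn : m ≤ n)
    (hirr : 2 ≤ m ∨ (m = 1 ∧ 3 ≤ n)) :
    det (crwReducedMatrix n m
        - (1 - (2 / ((n : ℝ) + m)) * (1 + Real.sqrt (1 - 1 / (2 * n) - 1 / (2 * m)))) • 1)
      = 0 ∧
    det (crwReducedMatrix n m
        - (1 - (2 / ((n : ℝ) + m)) * (1 - Real.sqrt (1 - 1 / (2 * n) - 1 / (2 * m)))) • 1)
      = 0 ∧
    ∀ z : ℂ, det ((crwReducedMatrix n m).map (Complex.ofReal ·) - z • 1) = 0 →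
      ‖z‖
        ≤ 1 - (2 / ((n : ℝ) + m)) * (1 - Real.sqrt (1 - 1 / (2 * n) - 1 / (2 * m))) := by
  have hm : 1 ≤ m := by omega
  have hn : 1 ≤ n := by omega
  have htwo : (2 : ℝ) ≤ n + m := by norm_cast; omega
  set r := Real.sqrt (1 - 1 / (2 * (n : ℝ)) - 1 / (2 * (m : ℝ)))
  set a := ((n : ℝ) + m - 2) / ((n : ℝ) + m)
  set t := 2 / ((n : ℝ) + m) * r
  have hbc : 2 / ((n : ℝ) + m) * ((((n : ℝ) - 1) / n + ((m : ℝ) - 1) / m) / ((n : ℝ) + m)) =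
      t ^ 2 := crwReducedMatrix_offDiag_mul hn hm
  have hlow : 1 - 2 / ((n : ℝ) + m) * (1 + r) = a - t := by simp only [a, t]; field_simp; ring
  have hhigh : 1 - 2 / ((n : ℝ) + m) * (1 - r) = a + t := by simp only [a, t]; field_simp; ring
  have ha : 0 ≤ a := div_nonneg (by linarith) (by linarith)
  refine ⟨(det_fin_two_of_same_diag_sub_smul_one_eq_zero_iff hbc _).2 (.inl hlow),
    (det_fin_two_of_same_diag_sub_smul_one_eq_zero_iff hbc _).2 (.inr hhigh), fun z hz => ?_⟩
  rw [crwReducedMatrix, map_of_fin_two, det_fin_two_of_same_diag_sub_smul_one_eq_zero_iff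
    (by rw [← Complex.ofReal_mul, ← Complex.ofReal_pow, hbc])] at hz
  rw [hhigh]
  exact Complex.norm_le_add_of_eq_sub_or_eq_add ha (by positivity) hz
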